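/- Let 1/2 < β < 1 and 1−β < α < 1/2, let T > 0 and L_b ≥ 0 with T ≤ min(1, 1/(2 L_b)). Let b : ℝ → ℝ satisfy |b(z)−b(z')| ≤ L_b |z−z'| for all z, z', let σ, g, g̃ : [0,T] → ℝ be β-Hölder continuous, and let x, x̃ : [0,T] → ℝ be continuous functions satisfying, for every t ∈ [0,T], x(t) = x₀ + ∫_0^t b(x(s)) ds + J_t(σ, g) and x̃(t) = x₀ + ∫_0^t b(x̃(s)) ds + J_t(σ, g̃), where J_t(σ, g) := ∫_0^t (D_{0+}^α σ)(r) · (D̃_{t−}^{1−α} g)(r) dr. Then ‖x − x̃‖_{0,T,∞} ≤ 4 k_{α,β} · ( ‖σ‖_{0,T,∞} + ‖σ‖_{0,T,β} ) · ‖g − g̃‖_{0,T,β} · T^β, where k_{α,β} := β·B(α+β, 1−α) / ((α+β−1)·Γ(α)·Γ(1−α)) + α·β·B(α+β, 1+β−α) / ((α+β−1)·(β−α)·Γ(α)·Γ(1−α)). (This is the stability estimate of Proposition 4.2 in the one-dimensional case, the stochastic integral being understood through Zähle's fractional representation.) -/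

import Mathlib

open MeasureTheory intervalIntegral

/-- The uniform norm of `f` on `[a,b]`: `‖f‖_{a,b,∞} = sup_{a ≤ r ≤ b} |f r|`. -/
noncomputable def supNorm (f : ℝ → ℝ) (a b : ℝ) : ℝ :=
  sSup ((fun r => |f r|) '' Set.Icc a b)

/-- The set of Hölder ratios of `f` on `[a,b]` with exponent `β`. -/
def holderSet (f : ℝ → ℝ) (a b β : ℝ) : Set ℝ :=
  {c | ∃ r s : ℝ, a ≤ r ∧ r < s ∧ s ≤ b ∧ c = |f s - f r| / (s - r) ^ β}

/-- The `β`-Hölder seminorm of `f` on `[a,b]`. -/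
noncomputable def holderNorm (f : ℝ → ℝ) (a b β : ℝ) : ℝ :=
  sSup (holderSet f a b β)

/-- Left-sided fractional derivative. -/
noncomputable def Dplus (f : ℝ → ℝ) (a α t : ℝ) : ℝ :=
  (1 / Real.Gamma (1 - α)) *
    (f t * (t - a) ^ (-α) + α * ∫ s in a..t, (f t - f s) * (t - s) ^ (-α - 1))

/-- Sign-normalized right-sided fractional derivative of order `1-α`. -/
noncomputable def Dminus (g : ℝ → ℝ) (b α t : ℝ) : ℝ :=
  (1 / Real.Gamma α) *
    ((g t - g b) * (b - t) ^ (α - 1) + (1 - α) * ∫ s in t..b, (g t - g s) * (s - t) ^ (α - 2))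

/-- The Beta function `B(x,y) = Γ(x)Γ(y)/Γ(x+y)`. -/
noncomputable def betaFn (x y : ℝ) : ℝ :=
  Real.Gamma x * Real.Gamma y / Real.Gamma (x + y)

/-- The constant `k_{α,β}` of Lemma 4.1. -/
noncomputable def kConst (α β : ℝ) : ℝ :=
  β * betaFn (α + β) (1 - α) / ((α + β - 1) * Real.Gamma α * Real.Gamma (1 - α)) +
    α * β * betaFn (α + β) (1 + β - α) /
      ((α + β - 1) * (β - α) * Real.Gamma α * Real.Gamma (1 - α))

/-- The Young integral `J_t(σ,g) = ∫_0^t (D_{0+}^α σ)(r) (D̃_{t-}^{1-α} g)(r) dr`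
in Zähle's fractional representation. -/
noncomputable def youngInt (α : ℝ) (σ g : ℝ → ℝ) (t : ℝ) : ℝ :=
  ∫ r in (0 : ℝ)..t, Dplus σ 0 α r * Dminus g t α r

/-!
Subtracting the two equations, the Lipschitz drift contributes at most
`Lb T ‖x - x̃‖∞ ≤ ‖x - x̃‖∞ / 2`, and `J_t(σ, g) - J_t(σ, g̃) = J_t(σ, g - g̃)` because the
fractional derivative `D̃` is linear in `g`; hence `‖x - x̃‖∞ ≤ 2 sup_t |J_t(σ, g - g̃)|`.
The Young integral is estimated pointwise in the integration variable: the Hölder bounds give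
`|D_{0+}^α σ (r)| ≲ ‖σ‖∞ r^{-α} + ‖σ‖_β r^{β-α}` and `|D̃_{t-}^{1-α} h (r)| ≲ ‖h‖_β (t-r)^{α+β-1}`,
and integrating the product of these powers over `[0, t]` produces the two Beta functions
in `k_{α,β}`.
-/

open Set

def HolderBoundOn (f : ℝ → ℝ) (a b β N : ℝ) : Prop :=
  ∀ ⦃u v : ℝ⦄, a ≤ u → u ≤ v → v ≤ b → |f v - f u| ≤ N * (v - u) ^ β

namespace HolderBoundOn

variable {f g : ℝ → ℝ} {a b β N N' : ℝ}

theorem mono (h : HolderBoundOn f a b β N) {a' b' : ℝ} (ha : a ≤ a') (hb : b' ≤ b) :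
    HolderBoundOn f a' b' β N :=
  fun _ _ hu huv hv => h (ha.trans hu) huv (hv.trans hb)

theorem sub (hf : HolderBoundOn f a b β N) (hg : HolderBoundOn g a b β N') :
    HolderBoundOn (fun s => f s - g s) a b β (N + N') := fun u v hu huv hv =>
  calc |(f v - g v) - (f u - g u)| ≤ |f v - f u| + |g v - g u| := by
        rw [sub_sub_sub_comm]; exact abs_sub _ _
    _ ≤ N * (v - u) ^ β + N' * (v - u) ^ β := add_le_add (hf hu huv hv) (hg hu huv hv)
    _ = (N + N') * (v - u) ^ β := by ring

theorem bddAbove_holderSet (h : HolderBoundOn f a b β N) : BddAbove (holderSet f a b β) := by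
  refine ⟨N, ?_⟩
  rintro _ ⟨r, s, har, hrs, hsb, rfl⟩
  rw [div_le_iff₀ (Real.rpow_pos_of_pos (sub_pos.2 hrs) β)]
  exact h har hrs.le hsb

theorem abs_sub_le (h : HolderBoundOn f a b β N) {u v : ℝ} (hu : u ∈ Icc a b) (hv : v ∈ Icc a b) :
    |f v - f u| ≤ |N| * |v - u| ^ β := by
  rcases le_total u v with huv | hvu
  · rw [abs_of_nonneg (sub_nonneg.2 huv)]
    exact (h hu.1 huv hv.2).trans (mul_le_mul_of_nonneg_right (le_abs_self N)
      (Real.rpow_nonneg (sub_nonneg.2 huv) β))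
  · rw [abs_sub_comm, abs_sub_comm v, abs_of_nonneg (sub_nonneg.2 hvu)]
    exact (h hv.1 hvu hu.2).trans (mul_le_mul_of_nonneg_right (le_abs_self N)
      (Real.rpow_nonneg (sub_nonneg.2 hvu) β))

theorem continuousOn (h : HolderBoundOn f a b β N) (hβ : 0 < β) : ContinuousOn f (Icc a b) := by
  intro u hu
  rw [ContinuousWithinAt, tendsto_iff_norm_sub_tendsto_zero]
  refine squeeze_zero' (Filter.Eventually.of_forall fun _ => norm_nonneg _)
    (eventually_nhdsWithin_of_forall fun v hv => h.abs_sub_le hu hv) ?_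
  have hcont : Continuous fun v => |N| * |v - u| ^ β :=
    continuous_const.mul ((continuous_id.sub continuous_const).abs.rpow_const fun _ => Or.inr hβ.le)
  simpa [Real.zero_rpow hβ.ne'] using (hcont.tendsto u).mono_left nhdsWithin_le_nhds

theorem of_holderSet (hβ : 0 < β) (h : BddAbove (holderSet f a b β)) :
    HolderBoundOn f a b β (holderNorm f a b β) := by
  intro r s har hrs hsb
  rcases hrs.eq_or_lt with rfl | hlt
  · simp [Real.zero_rpow hβ.ne']
  · rw [← div_le_iff₀ (Real.rpow_pos_of_pos (sub_pos.2 hlt) β)]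
    exact le_csSup h ⟨r, s, har, hlt, hsb, rfl⟩

theorem nonneg (h : HolderBoundOn f a b β N) (hab : a < b) : 0 ≤ N :=
  nonneg_of_mul_nonneg_left ((abs_nonneg _).trans (h le_rfl hab.le le_rfl))
    (Real.rpow_pos_of_pos (sub_pos.2 hab) β)

end HolderBoundOn

theorem abs_le_supNorm {f : ℝ → ℝ} {a b r : ℝ} (hf : ContinuousOn f (Icc a b))
    (hr : r ∈ Icc a b) : |f r| ≤ supNorm f a b :=
  le_csSup (isCompact_Icc.bddAbove_image hf.abs) ⟨r, hr, rfl⟩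

theorem supNorm_le {f : ℝ → ℝ} {a b C : ℝ} (hab : a ≤ b) (h : ∀ r ∈ Icc a b, |f r| ≤ C) :
    supNorm f a b ≤ C :=
  csSup_le ((nonempty_Icc.2 hab).image _) (forall_mem_image.2 h)

theorem integral_rpow_mul_sub_rpow {x y t : ℝ} (hx : 0 < x) (hy : 0 < y) (ht : 0 < t) :
    ∫ s in (0 : ℝ)..t, s ^ (x - 1) * (t - s) ^ (y - 1) = t ^ (x + y - 1) * betaFn x y := by
  apply Complex.ofReal_injective
  have hB := Complex.betaIntegral_scaled x y ht
  rw [Complex.betaIntegral_eq_Gamma_mul_div _ _ (by simpa) (by simpa)] at hB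
  rw [← intervalIntegral.integral_ofReal, betaFn]
  push_cast
  rw [Complex.ofReal_cpow ht.le, ← Complex.Gamma_ofReal, ← Complex.Gamma_ofReal,
    ← Complex.Gamma_ofReal]
  push_cast
  rw [← hB]
  refine intervalIntegral.integral_congr fun s hs => ?_
  rw [uIcc_of_le ht.le] at hs
  rw [Complex.ofReal_cpow hs.1, Complex.ofReal_cpow (sub_nonneg.2 hs.2)]
  push_cast
  ring

theorem betaFn_comm (x y : ℝ) : betaFn x y = betaFn y x := by
  rw [betaFn, betaFn, add_comm, mul_comm]

theorem intervalIntegrable_rpow_mul_sub_rpow {p q : ℝ} (hp : -1 < p) (hq : 0 ≤ q) (t : ℝ) :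
    IntervalIntegrable (fun r => r ^ p * (t - r) ^ q) volume 0 t :=
  (intervalIntegral.intervalIntegrable_rpow' hp).mul_continuousOn
    (ContinuousOn.rpow_const (by fun_prop) fun _ _ => Or.inr hq)

theorem abs_mul_rpow_le {x y N β p : ℝ} (hx : 0 < x) (h : |y| ≤ N * x ^ β) :
    |y * x ^ p| ≤ N * x ^ (β + p) := by
  rw [abs_mul, abs_of_pos (Real.rpow_pos_of_pos hx p), Real.rpow_add hx, ← mul_assoc]
  exact mul_le_mul_of_nonneg_right h (Real.rpow_nonneg hx.le p)

theorem intervalIntegrable_sub_rpow {p : ℝ} (hp : -1 < p) (a c : ℝ) :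
    IntervalIntegrable (fun s => (c - s) ^ p) volume a c := by
  simpa using (intervalIntegrable_rpow' (a := c - a) (b := c - c) hp).comp_sub_left c

theorem intervalIntegrable_rpow_sub {p : ℝ} (hp : -1 < p) (a c : ℝ) :
    IntervalIntegrable (fun s => (s - a) ^ p) volume a c := by
  simpa using (intervalIntegrable_rpow' (a := a - a) (b := c - a) hp).comp_sub_right a

theorem integral_sub_rpow {p : ℝ} (hp : -1 < p) (a c : ℝ) :
    ∫ s in a..c, (c - s) ^ p = (c - a) ^ (p + 1) / (p + 1) := by
  rw [intervalIntegral.integral_comp_sub_left (fun x => x ^ p) c, sub_self,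
    integral_rpow (Or.inl hp), Real.zero_rpow (by linarith), sub_zero]

theorem integral_rpow_sub {p : ℝ} (hp : -1 < p) (a c : ℝ) :
    ∫ s in a..c, (s - a) ^ p = (c - a) ^ (p + 1) / (p + 1) := by
  rw [intervalIntegral.integral_comp_sub_right (fun x => x ^ p) a, sub_self,
    integral_rpow (Or.inl hp), Real.zero_rpow (by linarith), sub_zero]

theorem HolderBoundOn.abs_Dminus_integrand_le {g : ℝ → ℝ} {r t α β N s : ℝ}
    (hg : HolderBoundOn g r t β N) (hs : s ∈ Ioc r t) :
    |(g r - g s) * (s - r) ^ (α - 2)| ≤ N * (s - r) ^ (α + β - 2) := by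
  have h := abs_mul_rpow_le (p := α - 2) (sub_pos.2 hs.1)
    (by rw [abs_sub_comm]; exact hg le_rfl hs.1.le hs.2)
  rwa [show β + (α - 2) = α + β - 2 by ring] at h

theorem HolderBoundOn.intervalIntegrable_Dminus_integrand {g : ℝ → ℝ} {r t α β N : ℝ}
    (hg : HolderBoundOn g r t β N) (hβ : 0 < β) (hαβ : 1 < α + β) (hrt : r ≤ t) :
    IntervalIntegrable (fun s => (g r - g s) * (s - r) ^ (α - 2)) volume r t := by
  refine ((intervalIntegrable_rpow_sub (p := α + β - 2) (by linarith) r t).const_mul N).mono_fun'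
    ?_ ?_ <;> rw [uIoc_of_le hrt]
  · refine ContinuousOn.aestronglyMeasurable ?_ measurableSet_Ioc
    exact (continuousOn_const.sub ((hg.continuousOn hβ).mono Ioc_subset_Icc_self)).mul
      (ContinuousOn.rpow_const (by fun_prop) fun s hs => Or.inl (sub_pos.2 hs.1).ne')
  · exact (ae_restrict_iff' measurableSet_Ioc).2
      (Filter.Eventually.of_forall fun s hs => hg.abs_Dminus_integrand_le hs)

theorem abs_Dplus_le {f : ℝ → ℝ} {a r α β K N : ℝ} (hα : 0 < α) (hαβ : α < β) (hα1 : α < 1)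
    (har : a < r) (hK : |f r| ≤ K) (hf : HolderBoundOn f a r β N) :
    |Dplus f a α r| ≤
      1 / Real.Gamma (1 - α) * (K * (r - a) ^ (-α) + α / (β - α) * N * (r - a) ^ (β - α)) := by
  have hΓ : 0 < 1 / Real.Gamma (1 - α) := one_div_pos.2 (Real.Gamma_pos_of_pos (by linarith))
  have hA : |f r * (r - a) ^ (-α)| ≤ K * (r - a) ^ (-α) := by
    rw [abs_mul, abs_of_pos (Real.rpow_pos_of_pos (sub_pos.2 har) _)]
    exact mul_le_mul_of_nonneg_right hK (Real.rpow_nonneg (sub_pos.2 har).le _)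
  have hI : |∫ s in a..r, (f r - f s) * (r - s) ^ (-α - 1)| ≤ N * (r - a) ^ (β - α) / (β - α) := by
    have h := intervalIntegral.norm_integral_le_of_norm_le
      (f := fun s => (f r - f s) * (r - s) ^ (-α - 1)) har.le ?_
      ((intervalIntegrable_sub_rpow (p := β - α - 1) (by linarith) a r).const_mul N)
    · rwa [intervalIntegral.integral_const_mul, integral_sub_rpow (by linarith),
        sub_add_cancel, ← mul_div_assoc] at h
    · filter_upwards [measure_eq_zero_iff_ae_notMem.1 (measure_singleton r)] with s hsr hs
      have h := abs_mul_rpow_le (p := -α - 1) (sub_pos.2 (lt_of_le_of_ne hs.2 hsr))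
        (hf hs.1.le hs.2 le_rfl)
      rwa [show β + (-α - 1) = β - α - 1 by ring] at h
  rw [Dplus, abs_mul, abs_of_pos hΓ]
  refine mul_le_mul_of_nonneg_left ?_ hΓ.le
  calc _ ≤ |f r * (r - a) ^ (-α)| + α * |∫ s in a..r, (f r - f s) * (r - s) ^ (-α - 1)| := by
        rw [← abs_of_pos hα, ← abs_mul, abs_of_pos hα]; exact abs_add_le _ _
    _ ≤ K * (r - a) ^ (-α) + α * (N * (r - a) ^ (β - α) / (β - α)) := by gcongr
    _ = _ := by ring

theorem abs_Dminus_le {g : ℝ → ℝ} {r t α β N : ℝ} (hα : 0 < α) (hα1 : α < 1)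
    (hαβ : 1 < α + β) (hrt : r < t) (hg : HolderBoundOn g r t β N) :
    |Dminus g t α r| ≤ N * (β / ((α + β - 1) * Real.Gamma α)) * (t - r) ^ (α + β - 1) := by
  have hΓ := Real.Gamma_pos_of_pos hα
  have hA : |(g r - g t) * (t - r) ^ (α - 1)| ≤ N * (t - r) ^ (α + β - 1) := by
    have h := abs_mul_rpow_le (p := α - 1) (sub_pos.2 hrt)
      (by rw [abs_sub_comm]; exact hg le_rfl hrt.le le_rfl)
    rwa [show β + (α - 1) = α + β - 1 by ring] at h
  have hI : |∫ s in r..t, (g r - g s) * (s - r) ^ (α - 2)| ≤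
      N * (t - r) ^ (α + β - 1) / (α + β - 1) := by
    have h := intervalIntegral.norm_integral_le_of_norm_le
      (f := fun s => (g r - g s) * (s - r) ^ (α - 2)) hrt.le ?_
      ((intervalIntegrable_rpow_sub (p := α + β - 2) (by linarith) r t).const_mul N)
    · rwa [intervalIntegral.integral_const_mul, integral_rpow_sub (by linarith),
        show α + β - 2 + 1 = α + β - 1 by ring, ← mul_div_assoc] at h
    · exact Filter.Eventually.of_forall fun s hs => hg.abs_Dminus_integrand_le hs
  rw [Dminus, abs_mul, abs_of_pos (one_div_pos.2 hΓ)]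
  calc _ ≤ 1 / Real.Gamma α * (|(g r - g t) * (t - r) ^ (α - 1)| +
        (1 - α) * |∫ s in r..t, (g r - g s) * (s - r) ^ (α - 2)|) := by
        gcongr
        rw [← abs_of_pos (sub_pos.2 hα1), ← abs_mul, abs_of_pos (sub_pos.2 hα1)]
        exact abs_add_le _ _
    _ ≤ 1 / Real.Gamma α * (N * (t - r) ^ (α + β - 1) +
        (1 - α) * (N * (t - r) ^ (α + β - 1) / (α + β - 1))) := by
        gcongr
    _ = _ := by
        have : α + β - 1 ≠ 0 := by linarith
        field_simp
        ring

theorem Dminus_sub {g g' : ℝ → ℝ} {b α t : ℝ}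
    (hg : IntervalIntegrable (fun s => (g t - g s) * (s - t) ^ (α - 2)) volume t b)
    (hg' : IntervalIntegrable (fun s => (g' t - g' s) * (s - t) ^ (α - 2)) volume t b) :
    Dminus (fun s => g s - g' s) b α t = Dminus g b α t - Dminus g' b α t := by
  have hI : ∫ s in t..b, ((g t - g' t) - (g s - g' s)) * (s - t) ^ (α - 2) =
      (∫ s in t..b, (g t - g s) * (s - t) ^ (α - 2)) -
        ∫ s in t..b, (g' t - g' s) * (s - t) ^ (α - 2) := by
    rw [← intervalIntegral.integral_sub hg hg']
    congr 1 with s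
    ring
  simp only [Dminus, hI]
  ring

theorem Dplus_congr {f f' : ℝ → ℝ} {a α t : ℝ} (hat : a ≤ t) (h : EqOn f f' (Icc a t)) :
    Dplus f a α t = Dplus f' a α t := by
  have hI : ∫ s in a..t, (f t - f s) * (t - s) ^ (-α - 1) =
      ∫ s in a..t, (f' t - f' s) * (t - s) ^ (-α - 1) :=
    intervalIntegral.integral_congr fun s hs => by
      rw [uIcc_of_le hat] at hs
      simp only [h hs, h (right_mem_Icc.2 hat)]
  rw [Dplus, Dplus, hI, h (right_mem_Icc.2 hat)]

theorem Dminus_congr {g g' : ℝ → ℝ} {b α t : ℝ} (htb : t ≤ b) (h : EqOn g g' (Icc t b)) :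
    Dminus g b α t = Dminus g' b α t := by
  have hI : ∫ s in t..b, (g t - g s) * (s - t) ^ (α - 2) =
      ∫ s in t..b, (g' t - g' s) * (s - t) ^ (α - 2) :=
    intervalIntegral.integral_congr fun s hs => by
      rw [uIcc_of_le htb] at hs
      simp only [h hs, h (left_mem_Icc.2 htb)]
  rw [Dminus, Dminus, hI, h (left_mem_Icc.2 htb), h (right_mem_Icc.2 htb)]

theorem Measurable.intervalIntegral_param {F : ℝ → ℝ → ℝ} (hF : Measurable (Function.uncurry F))
    {a b : ℝ → ℝ} (ha : Measurable a) (hb : Measurable b) :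
    Measurable fun r => ∫ s in a r..b r, F r s := by
  have hIoc : ∀ {c d : ℝ → ℝ}, Measurable c → Measurable d →
      Measurable fun r => ∫ s in Ioc (c r) (d r), F r s := by
    intro c d hc hd
    simp_rw [← MeasureTheory.integral_indicator measurableSet_Ioc]
    refine (StronglyMeasurable.integral_prod_right ?_).measurable
    have hS : MeasurableSet {p : ℝ × ℝ | p.2 ∈ Ioc (c p.1) (d p.1)} :=
      (measurableSet_lt (hc.comp measurable_fst) measurable_snd).inter
        (measurableSet_le measurable_snd (hd.comp measurable_fst))
    exact (hF.indicator hS).stronglyMeasurable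
  exact (hIoc ha hb).sub (hIoc hb ha)

theorem measurable_Dplus {f : ℝ → ℝ} (hf : Measurable f) (a α : ℝ) :
    Measurable (Dplus f a α) := by
  have hI : Measurable fun t => ∫ s in a..t, (f t - f s) * (t - s) ^ (-α - 1) :=
    Measurable.intervalIntegral_param (by fun_prop) measurable_const measurable_id
  unfold Dplus
  fun_prop

theorem measurable_Dminus {g : ℝ → ℝ} (hg : Measurable g) (b α : ℝ) :
    Measurable fun t => Dminus g b α t := by
  have hI : Measurable fun t => ∫ s in t..b, (g t - g s) * (s - t) ^ (α - 2) :=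
    Measurable.intervalIntegral_param (by fun_prop) measurable_id measurable_const
  unfold Dminus
  fun_prop

theorem ContinuousOn.exists_measurable_eqOn {f : ℝ → ℝ} {s : Set ℝ} (hf : ContinuousOn f s)
    (hs : MeasurableSet s) : ∃ f' : ℝ → ℝ, Measurable f' ∧ EqOn f f' s := by
  classical
  exact ⟨s.piecewise f 0, hf.measurable_piecewise continuousOn_const hs,
    (piecewise_eqOn s f 0).symm⟩

/-- `Dplus σ 0 α r` and `Dminus g t α r` only see `σ` and `g` on `[0, t]`, so we may replace them
by measurable functions and use measurability of parametric integrals. -/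
theorem aestronglyMeasurable_Dplus_mul_Dminus {σ g : ℝ → ℝ} {α t : ℝ}
    (hσ : ContinuousOn σ (Icc 0 t)) (hg : ContinuousOn g (Icc 0 t)) :
    AEStronglyMeasurable (fun r => Dplus σ 0 α r * Dminus g t α r)
      (volume.restrict (Ioc 0 t)) := by
  obtain ⟨σ', hσ'm, hσσ'⟩ := hσ.exists_measurable_eqOn measurableSet_Icc
  obtain ⟨g', hg'm, hgg'⟩ := hg.exists_measurable_eqOn measurableSet_Icc
  refine ((measurable_Dplus hσ'm 0 α).mul (measurable_Dminus hg'm t α)).aestronglyMeasurable.congr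
    ((ae_restrict_iff' measurableSet_Ioc).2 (Filter.Eventually.of_forall fun r hr => ?_))
  simp only [Pi.mul_apply]
  rw [Dplus_congr hr.1.le (hσσ'.mono (Icc_subset_Icc le_rfl hr.2)),
    Dminus_congr hr.2 (hgg'.mono (Icc_subset_Icc hr.1.le le_rfl))]

noncomputable def youngKernel (α β t K N r : ℝ) : ℝ :=
  K * (r ^ (-α) * (t - r) ^ (α + β - 1)) + α / (β - α) * N * (r ^ (β - α) * (t - r) ^ (α + β - 1))

theorem intervalIntegrable_youngKernel {α β : ℝ} (hα1 : α < 1) (hαβ1 : 1 < α + β)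
    (t K N : ℝ) : IntervalIntegrable (youngKernel α β t K N) volume 0 t :=
  ((intervalIntegrable_rpow_mul_sub_rpow (by linarith) (by linarith) t).const_mul K).add
    ((intervalIntegrable_rpow_mul_sub_rpow (by linarith) (by linarith) t).const_mul _)

theorem integral_youngKernel {α β t : ℝ} (hα1 : α < 1) (hαβ1 : 1 < α + β)
    (ht : 0 < t) (K N : ℝ) :
    ∫ r in (0 : ℝ)..t, youngKernel α β t K N r =
      K * (t ^ β * betaFn (α + β) (1 - α)) +
        α / (β - α) * N * (t ^ (2 * β) * betaFn (α + β) (1 + β - α)) := by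
  have hB₁ := integral_rpow_mul_sub_rpow (x := 1 - α) (y := α + β) (by linarith) (by linarith) ht
  have hB₂ := integral_rpow_mul_sub_rpow (x := 1 + β - α) (y := α + β) (by linarith)
    (by linarith) ht
  rw [show 1 - α - 1 = -α by ring, show 1 - α + (α + β) - 1 = β by ring, betaFn_comm] at hB₁
  rw [show 1 + β - α - 1 = β - α by ring, show 1 + β - α + (α + β) - 1 = 2 * β by ring,
    betaFn_comm] at hB₂
  simp only [youngKernel]
  rw [intervalIntegral.integral_add, intervalIntegral.integral_const_mul,
    intervalIntegral.integral_const_mul, hB₁, hB₂]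
  · exact (intervalIntegrable_rpow_mul_sub_rpow (by linarith) (by linarith) t).const_mul K
  · exact (intervalIntegrable_rpow_mul_sub_rpow (by linarith) (by linarith) t).const_mul _

section YoungIntegral

variable {σ G : ℝ → ℝ} {α β t K N H : ℝ}

theorem abs_Dplus_mul_Dminus_le (hα : 0 < α) (hαβ : α < β) (hα1 : α < 1) (hαβ1 : 1 < α + β)
    (hK : ∀ u ∈ Icc 0 t, |σ u| ≤ K) (hσ : HolderBoundOn σ 0 t β N)
    (hG : HolderBoundOn G 0 t β H) {r : ℝ} (hr : r ∈ Ioo 0 t) :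
    |Dplus σ 0 α r * Dminus G t α r| ≤
      H * β / ((α + β - 1) * Real.Gamma α * Real.Gamma (1 - α)) * youngKernel α β t K N r := by
  have h1 := abs_Dplus_le hα hαβ hα1 hr.1 (hK r (Ioo_subset_Icc_self hr)) (hσ.mono le_rfl hr.2.le)
  have h2 := abs_Dminus_le hα hα1 hαβ1 hr.2 (hG.mono hr.1.le le_rfl)
  rw [abs_mul]
  refine (mul_le_mul h1 h2 (abs_nonneg _) ((abs_nonneg _).trans h1)).trans_eq ?_
  have := (Real.Gamma_pos_of_pos hα).ne'
  have := (Real.Gamma_pos_of_pos (sub_pos.2 hα1)).ne'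
  have : α + β - 1 ≠ 0 := by linarith
  simp only [youngKernel, sub_zero]
  field_simp

theorem abs_Dplus_mul_Dminus_ae_le (hα : 0 < α) (hαβ : α < β) (hα1 : α < 1)
    (hαβ1 : 1 < α + β) (hK : ∀ u ∈ Icc 0 t, |σ u| ≤ K) (hσ : HolderBoundOn σ 0 t β N)
    (hG : HolderBoundOn G 0 t β H) :
    ∀ᵐ r, r ∈ Ioc 0 t → |Dplus σ 0 α r * Dminus G t α r| ≤
      H * β / ((α + β - 1) * Real.Gamma α * Real.Gamma (1 - α)) * youngKernel α β t K N r := by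
  filter_upwards [measure_eq_zero_iff_ae_notMem.1 (measure_singleton t)] with r hrt hr
  exact abs_Dplus_mul_Dminus_le hα hαβ hα1 hαβ1 hK hσ hG ⟨hr.1, lt_of_le_of_ne hr.2 hrt⟩

theorem intervalIntegrable_Dplus_mul_Dminus (hα : 0 < α) (hαβ : α < β) (hα1 : α < 1)
    (hαβ1 : 1 < α + β) (hK : ∀ u ∈ Icc 0 t, |σ u| ≤ K) (hσ : HolderBoundOn σ 0 t β N)
    (hG : HolderBoundOn G 0 t β H) (ht : 0 ≤ t) :
    IntervalIntegrable (fun r => Dplus σ 0 α r * Dminus G t α r) volume 0 t := by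
  have hβ : 0 < β := by linarith
  refine ((intervalIntegrable_youngKernel hα1 hαβ1 t K N).const_mul
    (H * β / ((α + β - 1) * Real.Gamma α * Real.Gamma (1 - α)))).mono_fun' ?_ ?_ <;>
    rw [uIoc_of_le ht]
  · exact aestronglyMeasurable_Dplus_mul_Dminus (hσ.continuousOn hβ) (hG.continuousOn hβ)
  · exact (ae_restrict_iff' measurableSet_Ioc).2
      (abs_Dplus_mul_Dminus_ae_le hα hαβ hα1 hαβ1 hK hσ hG)

theorem abs_youngInt_le_of_pos (hα : 0 < α) (hαβ : α < β) (hα1 : α < 1) (hαβ1 : 1 < α + β)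
    (hK : ∀ u ∈ Icc 0 t, |σ u| ≤ K) (hσ : HolderBoundOn σ 0 t β N)
    (hG : HolderBoundOn G 0 t β H) (ht : 0 < t) :
    |youngInt α σ G t| ≤ H * β / ((α + β - 1) * Real.Gamma α * Real.Gamma (1 - α)) *
      (K * (t ^ β * betaFn (α + β) (1 - α)) +
        α / (β - α) * N * (t ^ (2 * β) * betaFn (α + β) (1 + β - α))) := by
  have hI := intervalIntegral.norm_integral_le_of_norm_le
    (f := fun r => Dplus σ 0 α r * Dminus G t α r) ht.le
    (abs_Dplus_mul_Dminus_ae_le hα hαβ hα1 hαβ1 hK hσ hG)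
    ((intervalIntegrable_youngKernel hα1 hαβ1 t K N).const_mul
      (H * β / ((α + β - 1) * Real.Gamma α * Real.Gamma (1 - α))))
  rwa [intervalIntegral.integral_const_mul, integral_youngKernel hα1 hαβ1 ht] at hI

theorem abs_youngInt_le {T : ℝ} (hα : 0 < α) (hαβ : α < β) (hα1 : α < 1) (hαβ1 : 1 < α + β)
    (hK : ∀ u ∈ Icc 0 T, |σ u| ≤ K) (hσ : HolderBoundOn σ 0 T β N)
    (hG : HolderBoundOn G 0 T β H) (hT : 0 < T) (hT1 : T ≤ 1) (ht : t ∈ Icc 0 T) :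
    |youngInt α σ G t| ≤ kConst α β * (K + N) * H * T ^ β := by
  have hβ : 0 < β := by linarith
  have hΓ₁ := Real.Gamma_pos_of_pos hα
  have hΓ₂ := Real.Gamma_pos_of_pos (sub_pos.2 hα1)
  have hc : 0 < α + β - 1 := by linarith
  have hd : 0 < β - α := by linarith
  have hB₁ : 0 < betaFn (α + β) (1 - α) := ProbabilityTheory.beta_pos (by linarith) (by linarith)
  have hB₂ : 0 < betaFn (α + β) (1 + β - α) :=
    ProbabilityTheory.beta_pos (by linarith) (by linarith)
  set k₁ := β * betaFn (α + β) (1 - α) / ((α + β - 1) * Real.Gamma α * Real.Gamma (1 - α))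
  set k₂ := α * β * betaFn (α + β) (1 + β - α) /
    ((α + β - 1) * (β - α) * Real.Gamma α * Real.Gamma (1 - α))
  have hk₁ : 0 ≤ k₁ := (div_pos (mul_pos hβ hB₁) (mul_pos (mul_pos hc hΓ₁) hΓ₂)).le
  have hk₂ : 0 ≤ k₂ :=
    (div_pos (mul_pos (mul_pos hα hβ) hB₂) (mul_pos (mul_pos (mul_pos hc hd) hΓ₁) hΓ₂)).le
  have hK0 : 0 ≤ K := (abs_nonneg _).trans (hK 0 ⟨le_rfl, hT.le⟩)
  have hN0 : 0 ≤ N := hσ.nonneg hT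
  have hH0 : 0 ≤ H := hG.nonneg hT
  change _ ≤ (k₁ + k₂) * (K + N) * H * T ^ β
  rcases ht.1.eq_or_lt with rfl | ht0
  · simp only [youngInt, intervalIntegral.integral_same, abs_zero]
    exact mul_nonneg (mul_nonneg (mul_nonneg (add_nonneg hk₁ hk₂) (add_nonneg hK0 hN0)) hH0)
      (Real.rpow_nonneg hT.le β)
  have hC : 0 ≤ H * β / ((α + β - 1) * Real.Gamma α * Real.Gamma (1 - α)) :=
    div_nonneg (mul_nonneg hH0 hβ.le) (mul_pos (mul_pos hc hΓ₁) hΓ₂).le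
  have hαN : 0 ≤ α / (β - α) * N := mul_nonneg (div_nonneg hα.le hd.le) hN0
  have ht2β : t ^ (2 * β) ≤ t ^ β :=
    Real.rpow_le_rpow_of_exponent_ge ht0 (ht.2.trans hT1) (by linarith)
  have htT : t ^ β ≤ T ^ β := Real.rpow_le_rpow ht.1 ht.2 hβ.le
  calc |youngInt α σ G t|
      ≤ H * β / ((α + β - 1) * Real.Gamma α * Real.Gamma (1 - α)) *
          (K * (t ^ β * betaFn (α + β) (1 - α)) +
            α / (β - α) * N * (t ^ (2 * β) * betaFn (α + β) (1 + β - α))) :=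
        abs_youngInt_le_of_pos hα hαβ hα1 hαβ1 (fun u hu => hK u ⟨hu.1, hu.2.trans ht.2⟩)
          (hσ.mono le_rfl ht.2) (hG.mono le_rfl ht.2) ht0
    _ ≤ H * β / ((α + β - 1) * Real.Gamma α * Real.Gamma (1 - α)) *
          (K * (t ^ β * betaFn (α + β) (1 - α)) +
            α / (β - α) * N * (t ^ β * betaFn (α + β) (1 + β - α))) := by gcongr
    _ = H * (K * k₁ + N * k₂) * t ^ β := by
        simp only [k₁, k₂]
        field_simp
    _ ≤ H * ((k₁ + k₂) * (K + N)) * T ^ β := by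
        gcongr
        nlinarith [mul_nonneg hK0 hk₂, mul_nonneg hN0 hk₁]
    _ = (k₁ + k₂) * (K + N) * H * T ^ β := by ring

end YoungIntegral

theorem youngInt_sub {σ g g' : ℝ → ℝ} {α β t K N N₁ N₂ : ℝ} (hα : 0 < α) (hαβ : α < β)
    (hα1 : α < 1) (hαβ1 : 1 < α + β) (hK : ∀ u ∈ Icc 0 t, |σ u| ≤ K)
    (hσ : HolderBoundOn σ 0 t β N) (hg : HolderBoundOn g 0 t β N₁)
    (hg' : HolderBoundOn g' 0 t β N₂) (ht : 0 ≤ t) :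
    youngInt α σ (fun s => g s - g' s) t = youngInt α σ g t - youngInt α σ g' t := by
  have hβ : 0 < β := by linarith
  rw [youngInt, youngInt, youngInt, ← intervalIntegral.integral_sub
    (intervalIntegrable_Dplus_mul_Dminus hα hαβ hα1 hαβ1 hK hσ hg ht)
    (intervalIntegrable_Dplus_mul_Dminus hα hαβ hα1 hαβ1 hK hσ hg' ht)]
  refine intervalIntegral.integral_congr fun r hr => ?_
  rw [uIcc_of_le ht] at hr
  simp only [Dminus_sub ((hg.mono hr.1 le_rfl).intervalIntegrable_Dminus_integrand hβ hαβ1 hr.2)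
    ((hg'.mono hr.1 le_rfl).intervalIntegrable_Dminus_integrand hβ hαβ1 hr.2), mul_sub]

theorem abs_youngInt_sub_youngInt_le {σ g g' : ℝ → ℝ} {α β T t : ℝ} (hα : 0 < α) (hαβ : α < β)
    (hα1 : α < 1) (hαβ1 : 1 < α + β) (hT : 0 < T) (hT1 : T ≤ 1)
    (hσ : BddAbove (holderSet σ 0 T β)) (hg : BddAbove (holderSet g 0 T β))
    (hg' : BddAbove (holderSet g' 0 T β)) (ht : t ∈ Icc 0 T) :
    |youngInt α σ g t - youngInt α σ g' t| ≤
      kConst α β * (supNorm σ 0 T + holderNorm σ 0 T β) *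
        holderNorm (fun s => g s - g' s) 0 T β * T ^ β := by
  have hβ : 0 < β := by linarith
  have hσH := HolderBoundOn.of_holderSet hβ hσ
  have hgH := HolderBoundOn.of_holderSet hβ hg
  have hg'H := HolderBoundOn.of_holderSet hβ hg'
  have hK : ∀ u ∈ Icc 0 T, |σ u| ≤ supNorm σ 0 T :=
    fun u hu => abs_le_supNorm (hσH.continuousOn hβ) hu
  rw [← youngInt_sub hα hαβ hα1 hαβ1 (fun u hu => hK u ⟨hu.1, hu.2.trans ht.2⟩)
    (hσH.mono le_rfl ht.2) (hgH.mono le_rfl ht.2) (hg'H.mono le_rfl ht.2) ht.1]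
  exact abs_youngInt_le hα hαβ hα1 hαβ1 hK hσH
    (HolderBoundOn.of_holderSet hβ (hgH.sub hg'H).bddAbove_holderSet) hT hT1 ht

theorem abs_integral_comp_sub_integral_comp_le {b x x' : ℝ → ℝ} {L T t : ℝ} (hL : 0 ≤ L)
    (hb : ∀ z z' : ℝ, |b z - b z'| ≤ L * |z - z'|) (hx : ContinuousOn x (Icc 0 T))
    (hx' : ContinuousOn x' (Icc 0 T)) (ht : t ∈ Icc 0 T) :
    |(∫ s in (0 : ℝ)..t, b (x s)) - ∫ s in (0 : ℝ)..t, b (x' s)| ≤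
      L * supNorm (fun s => x s - x' s) 0 T * t := by
  have hbc : Continuous b := (LipschitzWith.of_dist_le_mul (K := L.toNNReal) fun z z' => by
    simpa only [Real.dist_eq, Real.coe_toNNReal _ hL] using hb z z').continuous
  have hsub : Icc 0 t ⊆ Icc 0 T := Icc_subset_Icc le_rfl ht.2
  have hint : ∀ y : ℝ → ℝ, ContinuousOn y (Icc 0 T) →
      IntervalIntegrable (fun s => b (y s)) volume 0 t := fun y hy =>
    (hbc.comp_continuousOn (hy.mono hsub)).intervalIntegrable_of_Icc ht.1
  rw [← intervalIntegral.integral_sub (hint x hx) (hint x' hx')]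
  refine (intervalIntegral.norm_integral_le_of_norm_le_const
    (f := fun s => b (x s) - b (x' s)) fun s hs => ?_).trans_eq
    (by rw [sub_zero, abs_of_nonneg ht.1])
  rw [uIoc_of_le ht.1] at hs
  exact (hb _ _).trans (mul_le_mul_of_nonneg_left
    (abs_le_supNorm (hx.sub hx') (hsub (Ioc_subset_Icc_self hs))) hL)

theorem stability_estimate_general (α β T Lb x₀ : ℝ) (b σ g g' x x' : ℝ → ℝ)
    (hβ2 : β < 1) (hα1 : 1 - β < α) (hα2 : α < 1 / 2)
    (hT : 0 < T) (hLb : 0 ≤ Lb) (hT2 : T ≤ min 1 (1 / (2 * Lb)))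
    (hb : ∀ z z' : ℝ, |b z - b z'| ≤ Lb * |z - z'|)
    (hσ : BddAbove (holderSet σ 0 T β))
    (hg : BddAbove (holderSet g 0 T β)) (hg' : BddAbove (holderSet g' 0 T β))
    (hx : ContinuousOn x (Set.Icc 0 T)) (hx' : ContinuousOn x' (Set.Icc 0 T))
    (heq : ∀ t ∈ Set.Icc (0 : ℝ) T,
      x t = x₀ + (∫ s in (0 : ℝ)..t, b (x s)) + youngInt α σ g t)
    (heq' : ∀ t ∈ Set.Icc (0 : ℝ) T,
      x' t = x₀ + (∫ s in (0 : ℝ)..t, b (x' s)) + youngInt α σ g' t) :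
    supNorm (fun t => x t - x' t) 0 T ≤
      4 * kConst α β * (supNorm σ 0 T + holderNorm σ 0 T β) *
        holderNorm (fun s => g s - g' s) 0 T β * T ^ β := by
  have hT1 : T ≤ 1 := hT2.trans (min_le_left _ _)
  have hLbT : Lb * T ≤ 1 / 2 := by
    rcases hLb.eq_or_lt with rfl | hLb
    · norm_num
    · linarith [(le_div_iff₀ (by positivity)).1 (hT2.trans (min_le_right _ _))]
  set M := supNorm (fun t => x t - x' t) 0 T
  set J := kConst α β * (supNorm σ 0 T + holderNorm σ 0 T β) *
    holderNorm (fun s => g s - g' s) 0 T β * T ^ β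
  have hJ : ∀ t ∈ Icc 0 T, |youngInt α σ g t - youngInt α σ g' t| ≤ J := fun t ht =>
    abs_youngInt_sub_youngInt_le (by linarith) (by linarith) (by linarith) (by linarith) hT hT1
      hσ hg hg' ht
  have hM0 : 0 ≤ M := (abs_nonneg _).trans (abs_le_supNorm (hx.sub hx') ⟨le_rfl, hT.le⟩)
  have hpoint : ∀ t ∈ Icc 0 T, |x t - x' t| ≤ 1 / 2 * M + J := fun t ht =>
    calc |x t - x' t|
        = |((∫ s in (0 : ℝ)..t, b (x s)) - ∫ s in (0 : ℝ)..t, b (x' s)) +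
            (youngInt α σ g t - youngInt α σ g' t)| := by rw [heq t ht, heq' t ht]; ring_nf
      _ ≤ Lb * M * t + J := (abs_add_le _ _).trans (add_le_add
          (abs_integral_comp_sub_integral_comp_le hLb hb hx hx' ht) (hJ t ht))
      _ ≤ 1 / 2 * M + J := by
          nlinarith [mul_le_mul_of_nonneg_left ht.2 (mul_nonneg hLb hM0),
            mul_le_mul_of_nonneg_right hLbT hM0]
  have hMJ : M ≤ 1 / 2 * M + J := supNorm_le hT.le hpoint
  linarith [(abs_nonneg _).trans (hJ 0 ⟨le_rfl, hT.le⟩)]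

/-- Proposition 4.2 (one-dimensional case): stability estimate for deterministic
differential equations driven by `β`-Hölder continuous functions. -/
theorem stability_estimate (α β T Lb x₀ : ℝ) (b σ g g' x x' : ℝ → ℝ)
    (hβ1 : 1 / 2 < β) (hβ2 : β < 1) (hα1 : 1 - β < α) (hα2 : α < 1 / 2)
    (hT : 0 < T) (hLb : 0 ≤ Lb) (hT2 : T ≤ min 1 (1 / (2 * Lb)))
    (hb : ∀ z z' : ℝ, |b z - b z'| ≤ Lb * |z - z'|)
    (hσ : BddAbove (holderSet σ 0 T β))
    (hg : BddAbove (holderSet g 0 T β)) (hg' : BddAbove (holderSet g' 0 T β))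
    (hx : ContinuousOn x (Set.Icc 0 T)) (hx' : ContinuousOn x' (Set.Icc 0 T))
    (heq : ∀ t ∈ Set.Icc (0 : ℝ) T,
      x t = x₀ + (∫ s in (0 : ℝ)..t, b (x s)) + youngInt α σ g t)
    (heq' : ∀ t ∈ Set.Icc (0 : ℝ) T,
      x' t = x₀ + (∫ s in (0 : ℝ)..t, b (x' s)) + youngInt α σ g' t) :
    supNorm (fun t => x t - x' t) 0 T ≤
      4 * kConst α β * (supNorm σ 0 T + holderNorm σ 0 T β) *
        holderNorm (fun s => g s - g' s) 0 T β * T ^ β :=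
  stability_estimate_general α β T Lb x₀ b σ g g' x x' hβ2 hα1 hα2 hT hLb hT2 hb hσ hg hg' hx hx'
    heq heq'
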